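/- In ℝ^1, if two polygonal curves P and Q each have k vertices and every vertex of P lies within distance r of the corresponding vertex of Q (same index), while consecutive anchor values p_1 < p_2 < ⋯ < p_k satisfy p_{i+1} − p_i ≥ 4r + 2, and every vertex of P lies within distance 1 of some anchor p_i with the i-th vertex near p_i, and likewise for Q, then d_dF(P,Q) = max_i |P_i − Q_i|. -/

import Mathlib

open Real

noncomputable section

abbrev Pt (d : ℕ) := EuclideanSpace ℝ (Fin d)

/-- One step of a coupling: advance the first and/or the second index by exactly 1. -/
def CouplingStep (a b : ℕ × ℕ) : Prop :=
  (b.1 = a.1 + 1 ∧ b.2 = a.2) ∨ (b.1 = a.1 ∧ b.2 = a.2 + 1) ∨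
    (b.1 = a.1 + 1 ∧ b.2 = a.2 + 1)

/-- A coupling between a curve with `k` vertices and one with `l` vertices
(0-based indices): starts at `(0,0)`, ends at `(k-1, l-1)`, monotone unit steps. -/
def IsCoupling (k l : ℕ) (c : List (ℕ × ℕ)) : Prop :=
  c.head? = some (0, 0) ∧ c.getLast? = some (k - 1, l - 1) ∧
    c.Chain' CouplingStep ∧ ∀ ij ∈ c, ij.1 < k ∧ ij.2 < l

/-- The maximum distance over the coupled pairs of a coupling. -/
def couplingCost {d : ℕ} (P Q : List (Pt d)) (c : List (ℕ × ℕ)) : ℝ :=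
  c.foldr (fun ij acc => max (dist (P.getD ij.1 0) (Q.getD ij.2 0)) acc) 0

/-- The discrete Fréchet distance between two polygonal curves, given as lists
of their vertices. -/
def dDF {d : ℕ} (P Q : List (Pt d)) : ℝ :=
  sInf { m : ℝ | ∃ c, IsCoupling P.length Q.length c ∧ m = couplingCost P Q c }

/-- The set of nearest neighbors of a query curve `Q` in a finite set `S` of
curves, under the discrete Fréchet distance. -/
def NN {d : ℕ} (S : Finset (List (Pt d))) (Q : List (Pt d)) : Set (List (Pt d)) :=
  { P | P ∈ S ∧ ∀ P' ∈ S, dDF Q P ≤ dDF Q P' }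

/-- The point of `ℝ²` with given coordinates. -/
def e2 (x y : ℝ) : Pt 2 := (WithLp.equiv 2 (Fin 2 → ℝ)).symm ![x, y]

/-- The point of `ℝ¹` with given coordinate. -/
def e1 (x : ℝ) : Pt 1 := (WithLp.equiv 2 (Fin 1 → ℝ)).symm ![x]

/-! Every coupling visits every row `i` of the index grid, and at a pair `(i, j)` with `j ≠ i`
the anchors `p i`, `p j` are at least `4r + 2` apart, so `|P i - Q j| ≥ 4r ≥ r ≥ |P i - Q i|`.
Hence every coupling costs at least `max_i |P i - Q i|`, which the diagonal coupling attains. -/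

lemma dist_e1 (a b : ℝ) : dist (e1 a) (e1 b) = |a - b| := by
  simp [e1, EuclideanSpace.dist_eq, Real.sqrt_sq_eq_abs, Real.dist_eq]

section Gaps

variable {k : ℕ} {p : Fin k → ℝ} {δ : ℝ} (hδ : 0 ≤ δ)
  (hp : ∀ i : Fin k, ∀ h : (i : ℕ) + 1 < k, δ ≤ p ⟨i + 1, h⟩ - p i)
include hδ hp

lemma le_sub_of_lt_of_forall_le_succ_sub {i j : Fin k} (hij : i < j) : δ ≤ p j - p i := by
  obtain ⟨i, hi⟩ := i
  obtain ⟨j, hj⟩ := j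
  rw [Fin.mk_lt_mk] at hij
  induction j, hij using Nat.le_induction with
  | base => exact hp ⟨i, hi⟩ hj
  | succ j hij ih =>
    linarith [ih (by omega), hp ⟨j, by omega⟩ hj]

lemma le_abs_sub_of_ne_of_forall_le_succ_sub {i j : Fin k} (hij : i ≠ j) :
    δ ≤ |p i - p j| := by
  rcases hij.lt_or_gt with h | h
  · rw [abs_sub_comm]
    exact (le_sub_of_lt_of_forall_le_succ_sub hδ hp h).trans (le_abs_self _)
  · exact (le_sub_of_lt_of_forall_le_succ_sub hδ hp h).trans (le_abs_self _)

end Gaps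

theorem List.IsChain.mem_of_le_of_le {l : List ℕ} (hl : l.IsChain fun a b => b = a ∨ b = a + 1)
    {a b i : ℕ} (ha : l.head? = some a) (hb : l.getLast? = some b) (hai : a ≤ i) (hib : i ≤ b) :
    i ∈ l := by
  induction hl generalizing a with
  | nil => simp at ha
  | singleton x =>
    simp only [List.head?_cons, List.getLast?_singleton, Option.some_inj] at ha hb
    simp only [List.mem_singleton]
    omega
  | @cons_cons x y t hxy _ ih =>
    rw [List.head?_cons, Option.some_inj] at ha
    subst ha
    rcases hai.eq_or_lt with rfl | hlt
    · exact List.mem_cons_self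
    · exact List.mem_cons_of_mem _ (ih rfl (by simpa using hb) (by omega))

lemma IsCoupling.exists_mem_of_lt {k l : ℕ} {c : List (ℕ × ℕ)} (hc : IsCoupling k l c) {i : ℕ}
    (hi : i < k) : ∃ j, (i, j) ∈ c := by
  obtain ⟨hhead, hlast, hchain, -⟩ := hc
  have hrows : (c.map Prod.fst).IsChain fun a b => b = a ∨ b = a + 1 :=
    (List.isChain_map _).2 <| hchain.imp fun a b hab => by
      rcases hab with ⟨h, -⟩ | ⟨h, -⟩ | ⟨h, -⟩ <;> simp [h]
  have hmem := hrows.mem_of_le_of_le (by simp [List.head?_map, hhead])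
    (b := k - 1) (by simp [List.getLast?_map, hlast]) (Nat.zero_le i) (by omega)
  simpa using hmem

lemma dist_le_couplingCost {d : ℕ} (P Q : List (Pt d)) {c : List (ℕ × ℕ)} {ij : ℕ × ℕ}
    (h : ij ∈ c) : dist (P.getD ij.1 0) (Q.getD ij.2 0) ≤ couplingCost P Q c := by
  induction c with
  | nil => simp at h
  | cons a t ih =>
    rcases List.mem_cons.mp h with rfl | h
    · exact le_max_left _ _
    · exact (ih h).trans (le_max_right _ _)

lemma couplingCost_le {d : ℕ} {P Q : List (Pt d)} {c : List (ℕ × ℕ)} {m : ℝ} (h0 : 0 ≤ m)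
    (h : ∀ ij ∈ c, dist (P.getD ij.1 0) (Q.getD ij.2 0) ≤ m) : couplingCost P Q c ≤ m := by
  induction c with
  | nil => exact h0
  | cons a t ih =>
    exact max_le (h a List.mem_cons_self) (ih fun ij hij => h ij (List.mem_cons_of_mem a hij))

lemma List.getD_ofFn {α : Type*} {k : ℕ} (f : Fin k → α) (d : α) {i : ℕ} (hi : i < k) :
    (List.ofFn f).getD i d = f ⟨i, hi⟩ := by
  simp [hi]

def diagonalCoupling (k : ℕ) : List (ℕ × ℕ) := (List.range k).map fun i => (i, i)

lemma isCoupling_diagonalCoupling {k : ℕ} (hk : 0 < k) : IsCoupling k k (diagonalCoupling k) := by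
  refine ⟨?_, ?_, ?_, ?_⟩
  · simp [diagonalCoupling, List.head?_range, hk.ne']
  · simp [diagonalCoupling, List.getLast?_range, hk.ne']
  · show List.IsChain _ _
    rw [diagonalCoupling, List.isChain_map, List.isChain_range]
    exact fun _ _ => Or.inr (Or.inr ⟨rfl, rfl⟩)
  · simp [diagonalCoupling]

section OfFn

variable {d k : ℕ} {P Q : Fin k → Pt d}

lemma couplingCost_diagonalCoupling_le_iSup :
    couplingCost (List.ofFn P) (List.ofFn Q) (diagonalCoupling k) ≤ ⨆ i, dist (P i) (Q i) := by
  refine couplingCost_le (Real.iSup_nonneg fun _ => dist_nonneg) fun ij hij => ?_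
  obtain ⟨i, hi, rfl⟩ : ∃ i, i < k ∧ (i, i) = ij := by simpa [diagonalCoupling] using hij
  rw [List.getD_ofFn _ _ hi, List.getD_ofFn _ _ hi]
  exact le_ciSup (f := fun i => dist (P i) (Q i)) (Set.finite_range _).bddAbove ⟨i, hi⟩

lemma dist_le_couplingCost_of_forall_dist_le
    (hPQ : ∀ i j, dist (P i) (Q i) ≤ dist (P i) (Q j)) {c : List (ℕ × ℕ)}
    (hc : IsCoupling k k c) (i : Fin k) :
    dist (P i) (Q i) ≤ couplingCost (List.ofFn P) (List.ofFn Q) c := by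
  obtain ⟨j, hij⟩ := hc.exists_mem_of_lt i.isLt
  have hj : j < k := (hc.2.2.2 _ hij).2
  have hpair := dist_le_couplingCost (List.ofFn P) (List.ofFn Q) hij
  rw [List.getD_ofFn _ _ i.isLt, List.getD_ofFn _ _ hj] at hpair
  exact (hPQ i ⟨j, hj⟩).trans hpair

theorem dDF_ofFn_eq_iSup_of_forall_dist_le (hk : 0 < k)
    (hPQ : ∀ i j, dist (P i) (Q i) ≤ dist (P i) (Q j)) :
    dDF (List.ofFn P) (List.ofFn Q) = ⨆ i, dist (P i) (Q i) := by
  have : Nonempty (Fin k) := ⟨⟨0, hk⟩⟩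
  have hlower : ∀ c, IsCoupling k k c →
      ⨆ i, dist (P i) (Q i) ≤ couplingCost (List.ofFn P) (List.ofFn Q) c := fun c hc =>
    ciSup_le (dist_le_couplingCost_of_forall_dist_le hPQ hc)
  have hdiag := isCoupling_diagonalCoupling hk
  refine IsLeast.csInf_eq ⟨⟨diagonalCoupling k, by simpa using hdiag, ?_⟩, ?_⟩
  · exact le_antisymm (hlower _ hdiag) couplingCost_diagonalCoupling_le_iSup
  · rintro _ ⟨c, hc, rfl⟩
    exact hlower c (by simpa using hc)

end OfFn

/-- in `ℝ¹`, if anchors are separated by at least `4r + 2`, each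
vertex of `P` and of `Q` lies within distance `1` of its anchor, and
corresponding vertices are within distance `r`, then the discrete Fréchet
distance equals the maximum distance over corresponding vertices. -/
theorem dDF_eq_sup_of_anchored (k : ℕ) (hk : 0 < k) (P Q : Fin k → Pt 1)
    (r : ℝ) (hr : 0 ≤ r) (p : Fin k → ℝ)
    (hsep : ∀ i : Fin k, ∀ h : (i : ℕ) + 1 < k, 4 * r + 2 ≤ p ⟨i + 1, h⟩ - p i)
    (hPa : ∀ i, dist (P i) (e1 (p i)) ≤ 1)
    (hQa : ∀ i, dist (Q i) (e1 (p i)) ≤ 1)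
    (hnear : ∀ i, dist (P i) (Q i) ≤ r) :
    dDF (List.ofFn P) (List.ofFn Q) = ⨆ i, dist (P i) (Q i) := by
  refine dDF_ofFn_eq_iSup_of_forall_dist_le hk fun i j => ?_
  rcases eq_or_ne i j with rfl | hij
  · exact le_rfl
  have hgap : 4 * r + 2 ≤ |p i - p j| :=
    le_abs_sub_of_ne_of_forall_le_succ_sub (by linarith) hsep hij
  have htri := dist_triangle4 (e1 (p i)) (P i) (Q j) (e1 (p j))
  rw [dist_e1, dist_comm (e1 _)] at htri
  linarith [hnear i, hPa i, hQa j]
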